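/- Let r, s be positive integers with r ≤ s + 1, let u, v, y, z ∈ ℂ with |u| ≤ 1, |v| ≤ 1, |z| < 1, let a_1,…,a_r, b_1,…,b_s, x ∈ ℂ with |b_1 y| < 1, x ≠ 0, 1 - b_1 q^j x ≠ 0 for all j ≥ 0, and 1 - b_i q^j ≠ 0 for all 2 ≤ i ≤ s and j ≥ 0. Then T(y D_q|v) applied to the function x ↦ rΦs(a_1,…,a_r; b_1 x, b_2,…,b_s; q, u, z) (where the q-derivative is taken in x), evaluated at x, equals ∑_{n=0}^{∞} u^{C(n,2)} (∏_{i=1}^{r}(a_i;q)_n) / ((q;q)_n (b_1 x;q)_n ∏_{i=2}^{s}(b_i;q)_n) · ((-1)^n q^{C(n,2)})^{1+s-r} z^n · ∑_{m=0}^{∞} v^{C(m,2)} (q^n;q)_m (b_1 y)^m / ((q;q)_m (b_1 q^n x;q)_m). -/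

import Mathlib

/-- The finite q-shifted factorial (a;q)_n = ∏_{j=0}^{n-1} (1 - a q^j). -/
noncomputable def qPoch (q a : ℂ) (n : ℕ) : ℂ :=
  ∏ j ∈ Finset.range n, (1 - a * q ^ j)

/-- The q-differential operator: (D_q f)(x) = (f(x) - f(qx))/x. -/
noncomputable def Dq (q : ℂ) (f : ℂ → ℂ) : ℂ → ℂ :=
  fun x => (f x - f (q * x)) / x

/-- The deformed q-exponential operator:
T(y D_q|v) f(x) = ∑_{m≥0} v^{C(m,2)} (y^m/(q;q)_m) (D_q^m f)(x). -/
noncomputable def Tq (q v y : ℂ) (f : ℂ → ℂ) (x : ℂ) : ℂ :=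
  ∑' m : ℕ, v ^ (m.choose 2) * (y ^ m / qPoch q q m) * ((Dq q)^[m] f x)

/-- The deformed basic hypergeometric series
rΦs(a₁,…,a_r; b₁,…,b_s; q, u, z). -/
noncomputable def dPhi (q u z : ℂ) {r s : ℕ} (a : Fin r → ℂ) (b : Fin s → ℂ) : ℂ :=
  ∑' n : ℕ,
    u ^ (n.choose 2) * (∏ i, qPoch q (a i) n) / (qPoch q q n * ∏ i, qPoch q (b i) n) *
      ((-1) ^ n * q ^ (n.choose 2)) ^ (1 + s - r) * z ^ n

/-!
Write the series as `f t = ∑ₙ Aₙ / (ct;q)ₙ` with `c = b₁`. The telescoping identity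
`1/(w;q)_N - 1/(wq;q)_N = w (1 - q^N) / (w;q)_{N+1}` gives
`D_q^m [1/(ct;q)ₙ] = c^m (q^n;q)_m / (ct;q)_{n+m}`, and `D_q` may be applied termwise.
The resulting double series over `(m, n)` converges absolutely: the finite products `(a;q)ₙ`
converge to `∏ⱼ (1 - a qʲ)`, so they are bounded, and their inverses are bounded when no factor
vanishes. Exchanging the sums and splitting `(cx;q)_{n+m} = (cx;q)ₙ (cxqⁿ;q)_m` gives the
inner series.
-/

open Finset Filter Topology

lemma qPoch_succ (q a : ℂ) (n : ℕ) : qPoch q a (n + 1) = qPoch q a n * (1 - a * q ^ n) :=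
  prod_range_succ _ n

lemma qPoch_succ' (q a : ℂ) (n : ℕ) : qPoch q a (n + 1) = (1 - a) * qPoch q (a * q) n := by
  rw [qPoch, prod_range_succ', pow_zero, mul_one, mul_comm]
  simp only [qPoch, pow_succ', mul_assoc]

lemma qPoch_add (q a : ℂ) (n m : ℕ) : qPoch q a (n + m) = qPoch q a n * qPoch q (a * q ^ n) m := by
  simp only [qPoch, prod_range_add, pow_add, mul_assoc]

lemma qPoch_ne_zero {q a : ℂ} (h : ∀ j, 1 - a * q ^ j ≠ 0) (n : ℕ) : qPoch q a n ≠ 0 :=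
  prod_ne_zero_iff.2 fun j _ => h j

lemma norm_qPoch_le_exp {q : ℂ} (hq : ‖q‖ < 1) (a : ℂ) (n : ℕ) :
    ‖qPoch q a n‖ ≤ Real.exp (‖a‖ / (1 - ‖q‖)) :=
  calc ‖qPoch q a n‖ ≤ ∏ j ∈ range n, (1 + ‖a‖ * ‖q‖ ^ j) := by
        rw [qPoch, norm_prod]
        gcongr with j
        simpa [norm_mul, norm_pow] using norm_sub_le (1 : ℂ) (a * q ^ j)
    _ ≤ Real.exp (∑ j ∈ range n, ‖a‖ * ‖q‖ ^ j) :=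
        Real.prod_one_add_le_exp_sum _ fun j => by positivity
    _ ≤ Real.exp (‖a‖ / (1 - ‖q‖)) := by
        rw [← mul_sum, div_eq_mul_inv, ← tsum_geometric_of_lt_one (norm_nonneg q) hq]
        gcongr
        exact (summable_geometric_of_lt_one (norm_nonneg q) hq).sum_le_tsum _
          fun j _ => by positivity

lemma summable_norm_neg_mul_pow {q : ℂ} (hq : ‖q‖ < 1) (a : ℂ) :
    Summable fun j => ‖-(a * q ^ j)‖ := by
  simpa [norm_mul, norm_pow] using (summable_geometric_of_lt_one (norm_nonneg q) hq).mul_left ‖a‖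

lemma tendsto_qPoch {q : ℂ} (hq : ‖q‖ < 1) (a : ℂ) :
    Tendsto (qPoch q a) atTop (𝓝 (∏' j, (1 - a * q ^ j))) := by
  have h := (multipliable_one_add_of_summable (summable_norm_neg_mul_pow hq a)).hasProd
  simp only [← sub_eq_add_neg] at h
  exact h.tendsto_prod_nat

lemma tprod_one_sub_mul_pow_ne_zero {q a : ℂ} (hq : ‖q‖ < 1) (h : ∀ j, 1 - a * q ^ j ≠ 0) :
    ∏' j, (1 - a * q ^ j) ≠ 0 := by
  simpa [sub_eq_add_neg] using tprod_one_add_ne_zero_of_summable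
    (fun j => by simpa [← sub_eq_add_neg] using h j) (summable_norm_neg_mul_pow hq a)

lemma exists_forall_norm_le_of_tendsto {E : Type*} [NormedAddCommGroup E] {f : ℕ → E} {L : E}
    (hf : Tendsto f atTop (𝓝 L)) : ∃ C, ∀ n, ‖f n‖ ≤ C := by
  obtain ⟨C, hC⟩ := hf.norm.bddAbove_range
  exact ⟨C, fun n => hC ⟨n, rfl⟩⟩

lemma exists_forall_norm_inv_qPoch_le {q a : ℂ} (hq : ‖q‖ < 1) (h : ∀ j, 1 - a * q ^ j ≠ 0) :
    ∃ C, ∀ n, ‖(qPoch q a n)⁻¹‖ ≤ C :=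
  exists_forall_norm_le_of_tendsto ((tendsto_qPoch hq a).inv₀ (tprod_one_sub_mul_pow_ne_zero hq h))

lemma one_sub_mul_pow_self_ne_zero {q : ℂ} (hq : ‖q‖ < 1) (j : ℕ) : 1 - q * q ^ j ≠ 0 := by
  rw [← pow_succ', sub_ne_zero, ne_comm]
  intro h
  have h' := congrArg norm h
  rw [norm_pow, norm_one] at h'
  exact (pow_lt_one₀ (norm_nonneg q) hq j.succ_ne_zero).ne h'

lemma norm_qPoch_pow_le {q : ℂ} (hq : ‖q‖ < 1) (n m : ℕ) :
    ‖qPoch q (q ^ n) m‖ ≤ Real.exp (1 - ‖q‖)⁻¹ := by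
  refine (norm_qPoch_le_exp hq _ m).trans (Real.exp_le_exp.2 ?_)
  rw [div_eq_mul_inv, norm_pow]
  have : 0 < 1 - ‖q‖ := by linarith
  exact mul_le_of_le_one_left (by positivity) (pow_le_one₀ (norm_nonneg q) hq.le)

lemma Dq_apply (q : ℂ) (f : ℂ → ℂ) (t : ℂ) : Dq q f t = (f t - f (q * t)) / t := rfl

lemma iterate_Dq_tsum {q : ℂ} {g : ℕ → ℂ → ℂ} {S : Set ℂ} (hS : ∀ t ∈ S, q * t ∈ S)
    (hg : ∀ m, ∀ t ∈ S, Summable fun n => (Dq q)^[m] (g n) t) (m : ℕ) {t : ℂ} (ht : t ∈ S) :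
    (Dq q)^[m] (fun t => ∑' n, g n t) t = ∑' n, (Dq q)^[m] (g n) t := by
  induction m generalizing t with
  | zero => rfl
  | succ m ih =>
    simp only [Function.iterate_succ_apply', Dq_apply]
    rw [ih ht, ih (hS t ht), ← (hg m t ht).tsum_sub (hg m _ (hS t ht)), tsum_div_const]

lemma inv_qPoch_sub_inv_qPoch_mul {q w : ℂ} {N : ℕ} (h : qPoch q w (N + 1) ≠ 0) :
    (qPoch q w N)⁻¹ - (qPoch q (w * q) N)⁻¹ = w * (1 - q ^ N) / qPoch q w (N + 1) := by
  have h1 := qPoch_succ q w N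
  have h2 := qPoch_succ' q w N
  have hw : qPoch q w N ≠ 0 := left_ne_zero_of_mul (h1 ▸ h)
  have hwq : qPoch q (w * q) N ≠ 0 := right_ne_zero_of_mul (h2 ▸ h)
  field_simp
  linear_combination qPoch q (w * q) N * h1 - qPoch q w N * h2

lemma iterate_Dq_div_qPoch {q c : ℂ} (hq : q ≠ 0) (A : ℂ) (n m : ℕ) {t : ℂ} (ht : t ≠ 0)
    (h : ∀ k, 1 - c * t * q ^ k ≠ 0) :
    (Dq q)^[m] (fun t => A / qPoch q (c * t) n) t =
      A * c ^ m * qPoch q (q ^ n) m / qPoch q (c * t) (n + m) := by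
  induction m generalizing t with
  | zero => simp [qPoch]
  | succ m ih =>
    have hqt : ∀ k, 1 - c * (q * t) * q ^ k ≠ 0 := fun k => by
      simpa only [pow_succ', mul_assoc, mul_left_comm] using h (k + 1)
    rw [Function.iterate_succ_apply', Dq_apply, ih ht h, ih (mul_ne_zero hq ht) hqt,
      show c * (q * t) = c * t * q by ring]
    calc _ = A * c ^ m * qPoch q (q ^ n) m *
          ((qPoch q (c * t) (n + m))⁻¹ - (qPoch q (c * t * q) (n + m))⁻¹) / t := by ring
      _ = A * c ^ m * qPoch q (q ^ n) m *
          (c * t * (1 - q ^ (n + m)) / qPoch q (c * t) (n + m + 1)) / t := by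
          rw [inv_qPoch_sub_inv_qPoch_mul (qPoch_ne_zero h _)]
      _ = _ := by
          rw [qPoch_succ q (q ^ n) m, ← add_assoc, pow_add]
          field_simp
          ring

section Series

variable {q c : ℂ} {A : ℕ → ℂ}

lemma iterate_Dq_tsum_div_qPoch (hq0 : q ≠ 0) (hq1 : ‖q‖ < 1) (hA : Summable fun n => ‖A n‖)
    (m : ℕ) {t : ℂ} (ht : t ≠ 0) (h : ∀ k, 1 - c * t * q ^ k ≠ 0) :
    (Dq q)^[m] (fun t => ∑' n, A n / qPoch q (c * t) n) t =
      ∑' n, A n * c ^ m * qPoch q (q ^ n) m / qPoch q (c * t) (n + m) := by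
  set S : Set ℂ := {t | t ≠ 0 ∧ ∀ k, 1 - c * t * q ^ k ≠ 0}
  have hS : ∀ t ∈ S, q * t ∈ S := fun t ⟨ht, h⟩ =>
    ⟨mul_ne_zero hq0 ht, fun k => by
      simpa only [pow_succ', mul_assoc, mul_left_comm] using h (k + 1)⟩
  have hg : ∀ m, ∀ t ∈ S, Summable fun n => (Dq q)^[m] (fun t => A n / qPoch q (c * t) n) t := by
    rintro m t ⟨ht, h⟩
    simp only [iterate_Dq_div_qPoch hq0 _ _ m ht h]
    obtain ⟨C, hC⟩ := exists_forall_norm_inv_qPoch_le hq1 h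
    refine .of_norm_bounded (hA.mul_right (‖c‖ ^ m * Real.exp (1 - ‖q‖)⁻¹ * C)) fun n => ?_
    rw [div_eq_mul_inv, norm_mul, norm_mul, norm_mul, norm_pow, mul_assoc ‖A n‖,
      mul_assoc ‖A n‖]
    gcongr
    · exact norm_qPoch_pow_le hq1 n m
    · exact hC _
  rw [iterate_Dq_tsum hS hg m ⟨ht, h⟩]
  simp only [iterate_Dq_div_qPoch hq0 _ _ m ht h]

lemma Tq_tsum_div_qPoch {v x y : ℂ} (hq0 : q ≠ 0) (hq1 : ‖q‖ < 1) (hv : ‖v‖ ≤ 1)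
    (hcy : ‖c * y‖ < 1) (hA : Summable fun n => ‖A n‖) (hx : x ≠ 0)
    (hcx : ∀ k, 1 - c * x * q ^ k ≠ 0) :
    Tq q v y (fun t => ∑' n, A n / qPoch q (c * t) n) x =
      ∑' n, A n / qPoch q (c * x) n * ∑' m, v ^ m.choose 2 * qPoch q (q ^ n) m * (c * y) ^ m /
        (qPoch q q m * qPoch q (c * q ^ n * x) m) := by
  set T : ℕ → ℕ → ℂ := fun m n => v ^ m.choose 2 * (y ^ m / qPoch q q m) *
    (A n * c ^ m * qPoch q (q ^ n) m / qPoch q (c * x) (n + m))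
  have hT : Summable (Function.uncurry T) := by
    obtain ⟨C₁, hC₁⟩ := exists_forall_norm_inv_qPoch_le hq1 (one_sub_mul_pow_self_ne_zero hq1)
    obtain ⟨C₂, hC₂⟩ := exists_forall_norm_inv_qPoch_le hq1 hcx
    have hgeom := summable_geometric_of_lt_one (norm_nonneg _) hcy
    refine .of_norm_bounded
      ((hgeom.mul_of_nonneg hA (fun m => by positivity) fun n => by positivity).mul_left
        (C₁ * Real.exp (1 - ‖q‖)⁻¹ * C₂)) ?_
    rintro ⟨m, n⟩
    calc ‖T m n‖ = ‖v‖ ^ m.choose 2 * ‖(qPoch q q m)⁻¹‖ * ‖qPoch q (q ^ n) m‖ *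
          ‖(qPoch q (c * x) (n + m))⁻¹‖ * (‖c * y‖ ^ m * ‖A n‖) := by
          simp only [T, div_eq_mul_inv, norm_mul, norm_pow]
          ring
      _ ≤ 1 * C₁ * Real.exp (1 - ‖q‖)⁻¹ * C₂ * (‖c * y‖ ^ m * ‖A n‖) := by
          have hC₁0 : 0 ≤ C₁ := (norm_nonneg _).trans (hC₁ 0)
          bound [hC₁ m, hC₂ (n + m), norm_qPoch_pow_le hq1 n m,
            pow_le_one₀ (n := m.choose 2) (norm_nonneg v) hv]
      _ = _ := by simp only [one_mul]
  calc Tq q v y _ x = ∑' m, ∑' n, T m n := by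
        refine tsum_congr fun m => ?_
        rw [iterate_Dq_tsum_div_qPoch hq0 hq1 hA m hx hcx, ← tsum_mul_left]
    _ = ∑' n, ∑' m, T m n := hT.tsum_comm.symm
    _ = _ := by
        refine tsum_congr fun n => ?_
        rw [← tsum_mul_left]
        refine tsum_congr fun m => ?_
        simp only [T]
        rw [qPoch_add, show c * x * q ^ n = c * q ^ n * x by ring, mul_pow]
        simp only [div_eq_mul_inv, mul_inv]
        ring

end Series

lemma dPhi_update {r s : ℕ} (q u z : ℂ) (a : Fin r → ℂ) (b : Fin s → ℂ) (i₀ : Fin s) (w : ℂ) :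
    dPhi q u z a (Function.update b i₀ w) =
      ∑' n, u ^ n.choose 2 * (∏ i, qPoch q (a i) n) /
          (qPoch q q n * ∏ i ∈ univ.erase i₀, qPoch q (b i) n) *
          ((-1) ^ n * q ^ n.choose 2) ^ (1 + s - r) * z ^ n / qPoch q w n := by
  refine tsum_congr fun n => ?_
  have herase : ∏ i ∈ univ.erase i₀, qPoch q (Function.update b i₀ w i) n =
      ∏ i ∈ univ.erase i₀, qPoch q (b i) n :=
    prod_congr rfl fun i hi => by rw [Function.update_of_ne (ne_of_mem_erase hi)]
  rw [← mul_prod_erase univ (fun i => qPoch q (Function.update b i₀ w i) n) (mem_univ i₀),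
    Function.update_self, herase]
  simp only [div_eq_mul_inv, mul_inv]
  ring

lemma summable_norm_hypergeometric_term {ι : Type*} {r : ℕ} {q u z : ℂ} (hq : ‖q‖ < 1)
    (hu : ‖u‖ ≤ 1) (hz : ‖z‖ < 1) (a : Fin r → ℂ) (t : Finset ι) (b : ι → ℂ)
    (hb : ∀ i ∈ t, ∀ j, 1 - b i * q ^ j ≠ 0) (e : ℕ) :
    Summable fun n => ‖u ^ n.choose 2 * (∏ i, qPoch q (a i) n) /
      (qPoch q q n * ∏ i ∈ t, qPoch q (b i) n) * ((-1) ^ n * q ^ n.choose 2) ^ e * z ^ n‖ := by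
  have hlim : Tendsto (fun n => (∏ i, qPoch q (a i) n) / (qPoch q q n * ∏ i ∈ t, qPoch q (b i) n))
      atTop _ := (tendsto_finsetProd univ fun i _ => tendsto_qPoch hq (a i)).div
    ((tendsto_qPoch hq q).mul (tendsto_finsetProd t fun i _ => tendsto_qPoch hq (b i)))
    (mul_ne_zero (tprod_one_sub_mul_pow_ne_zero hq (one_sub_mul_pow_self_ne_zero hq))
      (prod_ne_zero_iff.2 fun i hi => tprod_one_sub_mul_pow_ne_zero hq (hb i hi)))
  obtain ⟨C, hC⟩ := exists_forall_norm_le_of_tendsto hlim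
  refine .of_nonneg_of_le (fun n => norm_nonneg _) (fun n => ?_)
    ((summable_geometric_of_lt_one (norm_nonneg z) hz).mul_left C)
  have hq' : ‖(-1) ^ n * q ^ n.choose 2‖ ≤ 1 := by
    simpa using pow_le_one₀ (norm_nonneg q) hq.le
  calc _ = ‖u‖ ^ n.choose 2 * ‖(∏ i, qPoch q (a i) n) /
        (qPoch q q n * ∏ i ∈ t, qPoch q (b i) n)‖ * ‖(-1) ^ n * q ^ n.choose 2‖ ^ e * ‖z‖ ^ n := by
        rw [mul_div_assoc]
        simp only [norm_mul, norm_pow]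
    _ ≤ 1 * C * 1 * ‖z‖ ^ n := by
        have hC₀ : 0 ≤ C := (norm_nonneg _).trans (hC 0)
        bound [hC n, pow_le_one₀ (n := n.choose 2) (norm_nonneg u) hu,
          pow_le_one₀ (n := e) (norm_nonneg _) hq']
    _ = C * ‖z‖ ^ n := by ring

theorem stmt13_general (q u v y z : ℂ) (hq0 : 0 < ‖q‖) (hq1 : ‖q‖ < 1)
    (hu : ‖u‖ ≤ 1) (hv : ‖v‖ ≤ 1) (hz : ‖z‖ < 1)
    (r s : ℕ) (hs : 0 < s)
    (a : Fin r → ℂ) (b : Fin s → ℂ) (x : ℂ)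
    (hb1y : ‖b ⟨0, hs⟩ * y‖ < 1) (hx : x ≠ 0)
    (hb1 : ∀ j : ℕ, 1 - b ⟨0, hs⟩ * q ^ j * x ≠ 0)
    (hbi : ∀ i : Fin s, i ≠ ⟨0, hs⟩ → ∀ j : ℕ, 1 - b i * q ^ j ≠ 0) :
    Tq q v y
        (fun t => dPhi q u z a (Function.update b ⟨0, hs⟩ (b ⟨0, hs⟩ * t))) x =
      ∑' n : ℕ,
        u ^ (n.choose 2) * (∏ i, qPoch q (a i) n) /
            (qPoch q q n * qPoch q (b ⟨0, hs⟩ * x) n *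
              ∏ i ∈ Finset.univ.erase (⟨0, hs⟩ : Fin s), qPoch q (b i) n) *
          ((-1) ^ n * q ^ (n.choose 2)) ^ (1 + s - r) * z ^ n *
          ∑' m : ℕ,
            v ^ (m.choose 2) * qPoch q (q ^ n) m * (b ⟨0, hs⟩ * y) ^ m /
              (qPoch q q m * qPoch q (b ⟨0, hs⟩ * q ^ n * x) m) := by
  have hA := summable_norm_hypergeometric_term hq1 hu hz a (univ.erase ⟨0, hs⟩) b
    (fun i hi => hbi i (ne_of_mem_erase hi)) (1 + s - r)
  simp only [dPhi_update]
  rw [Tq_tsum_div_qPoch (norm_pos_iff.1 hq0) hq1 hv hb1y hA hx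
    fun k => by simpa only [mul_right_comm] using hb1 k]
  refine tsum_congr fun n => ?_
  simp only [div_eq_mul_inv, mul_inv]
  ring

theorem stmt13 (q u v y z : ℂ) (hq0 : 0 < ‖q‖) (hq1 : ‖q‖ < 1)
    (hu : ‖u‖ ≤ 1) (hv : ‖v‖ ≤ 1) (hz : ‖z‖ < 1)
    (r s : ℕ) (hr : 1 ≤ r) (hs : 0 < s) (hrs : r ≤ s + 1)
    (a : Fin r → ℂ) (b : Fin s → ℂ) (x : ℂ)
    (hb1y : ‖b ⟨0, hs⟩ * y‖ < 1) (hx : x ≠ 0)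
    (hb1 : ∀ j : ℕ, 1 - b ⟨0, hs⟩ * q ^ j * x ≠ 0)
    (hbi : ∀ i : Fin s, i ≠ ⟨0, hs⟩ → ∀ j : ℕ, 1 - b i * q ^ j ≠ 0) :
    Tq q v y
        (fun t => dPhi q u z a (Function.update b ⟨0, hs⟩ (b ⟨0, hs⟩ * t))) x =
      ∑' n : ℕ,
        u ^ (n.choose 2) * (∏ i, qPoch q (a i) n) /
            (qPoch q q n * qPoch q (b ⟨0, hs⟩ * x) n *
              ∏ i ∈ Finset.univ.erase (⟨0, hs⟩ : Fin s), qPoch q (b i) n) *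
          ((-1) ^ n * q ^ (n.choose 2)) ^ (1 + s - r) * z ^ n *
          ∑' m : ℕ,
            v ^ (m.choose 2) * qPoch q (q ^ n) m * (b ⟨0, hs⟩ * y) ^ m /
              (qPoch q q m * qPoch q (b ⟨0, hs⟩ * q ^ n * x) m) :=
  stmt13_general q u v y z hq0 hq1 hu hv hz r s hs a b x hb1y hx hb1 hbi
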